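/- For every dimension d ≥ 3, every ε > 0 and every b > 0 one can find b̃ > b and functions χ₁, χ₂ : ℝ^d → ℝ which are Lipschitz continuous and continuously differentiable outside a closed Lebesgue-null set, with χ₁² + χ₂² ≡ 1, χ₁ = 1 on {|x| ≤ b}, χ₁ = 0 on {|x| > b̃}, such that in addition for i = 1, 2 and every ψ ∈ C_c^∞(ℝ^d; ℂ) one has ∫_{ℝ^d} |∇χᵢ(x)|² |ψ(x)|² dx ≤ 4ε ∫_{ℝ^d} |∇ψ(x)|² dx (the integrand |∇χᵢ|²|ψ|² being defined almost everywhere). -/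

import Mathlib

/-!
Write `θ(x) = (π/2)·s(log(|x|/b)/L)` with a smooth step `s`, and take `χ₁ = cos θ`, `χ₂ = sin θ`.
Then `|∇χᵢ| ≤ |∇θ| ≤ C/(L|x|)` on the annulus `b ≤ |x| ≤ b e^L` and `∇χᵢ = 0` off it, so in polar
coordinates `‖∇χᵢ‖_{L^d}^d ≤ (C/L)^d · d |B₁| L`. Instead of Hardy's inequality we use Hölder with
exponents `d/2`, `d/(d-2)` and then the Gagliardo–Nirenberg–Sobolev inequality:
`∫ |∇χᵢ|²|ψ|² ≤ ‖∇χᵢ‖²_{L^d} ‖ψ‖²_{L^{2d/(d-2)}} ≲ L^{2/d-2} ‖∇ψ‖²_{L²}`,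
and `L^{2/d-2} → 0` because `d > 2`.
-/

open MeasureTheory

-- `|∇ψ(x)|²` for complex-valued `ψ`; for real-valued `χ` the statement writes `|∇χ(x)|` as
-- the operator norm `‖fderiv ℝ χ x‖`.
noncomputable def gradSqC1 (d : ℕ) (ψ : EuclideanSpace ℝ (Fin d) → ℂ)
    (x : EuclideanSpace ℝ (Fin d)) : ℝ :=
  ∑ i, ‖fderiv ℝ ψ x (EuclideanSpace.single i 1)‖ ^ 2

open Real Set Metric Module Filter Topology
open scoped ENNReal NNReal RealInnerProductSpace

theorem ContinuousLinearMap.norm_sq_le_sum_norm_apply_sq {ι E F : Type*} [Fintype ι]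
    [NormedAddCommGroup E] [InnerProductSpace ℝ E] [NormedAddCommGroup F] [NormedSpace ℝ F]
    (b : OrthonormalBasis ι ℝ E) (T : E →L[ℝ] F) :
    ‖T‖ ^ 2 ≤ ∑ i, ‖T (b i)‖ ^ 2 := by
  suffices ‖T‖ ≤ √(∑ i, ‖T (b i)‖ ^ 2) from
    (pow_le_pow_left₀ (norm_nonneg T) this 2).trans_eq (sq_sqrt (by positivity))
  refine T.opNorm_le_bound (sqrt_nonneg _) fun v => ?_
  calc ‖T v‖ = ‖∑ i, ⟪b i, v⟫ • T (b i)‖ := by simp_rw [← map_smul, ← map_sum, b.sum_repr']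
    _ ≤ ∑ i, |⟪b i, v⟫| * ‖T (b i)‖ := by
      simpa only [norm_smul, Real.norm_eq_abs] using
        norm_sum_le Finset.univ fun i => ⟪b i, v⟫ • T (b i)
    _ ≤ √(∑ i, |⟪b i, v⟫| ^ 2) * √(∑ i, ‖T (b i)‖ ^ 2) := sum_mul_le_sqrt_mul_sqrt _ _ _
    _ = √(∑ i, ‖T (b i)‖ ^ 2) * ‖v‖ := by
      rw [mul_comm]; simp_rw [sq_abs, b.sum_sq_inner_right, sqrt_sq (norm_nonneg v)]

theorem norm_fderiv_comp_le_of_lipschitzWith {E F G : Type*} [NormedAddCommGroup E]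
    [NormedSpace ℝ E] [NormedAddCommGroup F] [NormedSpace ℝ F] [NormedAddCommGroup G]
    [NormedSpace ℝ G] {f : F → G} {g : E → F} {K : ℝ≥0} {x : E} (hf : LipschitzWith K f)
    (hfd : DifferentiableAt ℝ f (g x)) (hg : DifferentiableAt ℝ g x) :
    ‖fderiv ℝ (f ∘ g) x‖ ≤ K * ‖fderiv ℝ g x‖ := by
  rw [fderiv_comp x hfd hg]
  exact (ContinuousLinearMap.opNorm_comp_le _ _).trans
    (mul_le_mul_of_nonneg_right (norm_fderiv_le_of_lipschitz ℝ hf) (norm_nonneg _))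

theorem exists_pos_sq_mul_rpow_div_lt (A : ℝ) {D p δ : ℝ} (hD : 0 ≤ D) (hp : p < 1) (hδ : 0 < δ) :
    ∃ L > 0, (A * (D * L) ^ p / L) ^ 2 < δ := by
  have hlim : Tendsto (fun L : ℝ => (A * D ^ p * L ^ (-(1 - p))) ^ 2) atTop (𝓝 0) := by
    simpa using ((tendsto_rpow_neg_atTop (sub_pos.2 hp)).const_mul (A * D ^ p)).pow 2
  obtain ⟨L, hL, hLδ⟩ :=
    ((eventually_gt_atTop 0).and (hlim.eventually (gt_mem_nhds hδ))).exists
  refine ⟨L, hL, lt_of_eq_of_lt ?_ hLδ⟩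
  rw [mul_rpow hD hL.le, neg_sub, rpow_sub_one hL.ne']
  ring

theorem exists_holderTriple_sobolevExponent {n : ℕ} (hn : 2 < n) :
    ∃ p' : ℝ≥0, ENNReal.HolderTriple n p' 2 ∧ (p' : ℝ)⁻¹ = 2⁻¹ - (n : ℝ)⁻¹ := by
  have hn' : (n : ℝ≥0)⁻¹ < 2⁻¹ := by
    rw [inv_lt_inv₀ (by exact_mod_cast (show 0 < n by omega)) two_pos]
    exact_mod_cast hn
  refine ⟨(2⁻¹ - (n : ℝ≥0)⁻¹)⁻¹, ⟨?_⟩, ?_⟩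
  · rw [ENNReal.coe_inv (tsub_pos_of_lt hn').ne', inv_inv, ENNReal.coe_sub,
      ENNReal.coe_inv two_ne_zero, ENNReal.coe_inv (by positivity)]
    exact add_tsub_cancel_of_le (ENNReal.inv_le_inv.2 (by exact_mod_cast hn.le))
  · rw [NNReal.coe_inv, inv_inv, NNReal.coe_sub hn'.le]
    simp

theorem MeasureTheory.MemLp.integral_norm_sq_eq {α F : Type*} [MeasurableSpace α] {μ : Measure α}
    [NormedAddCommGroup F] {f : α → F} (hf : MemLp f 2 μ) :
    ∫ x, ‖f x‖ ^ 2 ∂μ = (eLpNorm f 2 μ).toReal ^ 2 := by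
  rw [hf.eLpNorm_eq_integral_rpow_norm two_ne_zero ENNReal.ofNat_ne_top,
    ENNReal.toReal_ofReal (by positivity), ← Real.rpow_natCast, ← Real.rpow_mul
      (integral_nonneg fun x => by positivity)]
  norm_num

-- `smoothTransition` is constant off `[0, 1]`, so it factors through `projIcc 0 1`.
theorem Real.exists_lipschitzWith_smoothTransition : ∃ K, LipschitzWith K smoothTransition := by
  obtain ⟨K, hK⟩ := (smoothTransition.contDiff (n := 1)).contDiffOn.exists_lipschitzOnWith
    one_ne_zero (convex_Icc 0 1) isCompact_Icc
  refine ⟨K, ?_⟩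
  convert hK.to_restrict.comp (LipschitzWith.projIcc zero_le_one) using 1
  · simp
  · funext x
    simp

noncomputable def annulusWeight {E : Type*} [Norm E] (a a' : ℝ) (x : E) : ℝ :=
  (Icc a a').indicator (fun r => r⁻¹) ‖x‖

theorem annulusWeight_le_inv {E : Type*} [Norm E] {a a' : ℝ} (ha : 0 < a) (x : E) :
    annulusWeight a a' x ≤ a⁻¹ :=
  indicator_apply_le' (fun hx => inv_anti₀ ha hx.1) fun _ => (inv_pos.2 ha).le

section Sobolev

variable {E F : Type*} [NormedAddCommGroup E] [NormedSpace ℝ E] [FiniteDimensional ℝ E]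
  [MeasurableSpace E] [BorelSpace E] (μ : Measure E) [μ.IsAddHaarMeasure]
  [NormedAddCommGroup F] [NormedSpace ℝ F] [FiniteDimensional ℝ F]

theorem integral_norm_sq_mul_norm_sq_le_of_memLp {G : Type*} [NormedAddCommGroup G]
    (hE : 2 < finrank ℝ E) {v : E → G} {w : E → ℝ} (hvw : ∀ x, ‖v x‖ ≤ w x)
    (hw : MemLp w (finrank ℝ E) μ) {ψ : E → F} (hψ : ContDiff ℝ 1 ψ) (hψc : HasCompactSupport ψ) :
    ∫ x, ‖v x‖ ^ 2 * ‖ψ x‖ ^ 2 ∂μ ≤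
      ((eLpNorm w (finrank ℝ E) μ).toReal * SNormLESNormFDerivOfEqConst F μ 2) ^ 2 *
        ∫ x, ‖fderiv ℝ ψ x‖ ^ 2 ∂μ := by
  set d := finrank ℝ E
  obtain ⟨p', hp', hp'inv⟩ := exists_holderTriple_sobolevExponent hE
  have hSobolev :
      eLpNorm ψ p' μ ≤ SNormLESNormFDerivOfEqConst F μ 2 * eLpNorm (fderiv ℝ ψ) 2 μ := by
    simpa using eLpNorm_le_eLpNorm_fderiv_of_eq μ hψ hψc (p := 2) one_le_two
      (Nat.zero_lt_two.trans hE) (by simpa using hp'inv)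
  have hψq : MemLp ψ p' μ := hψ.continuous.memLp_of_hasCompactSupport hψc
  have hdψ : MemLp (fderiv ℝ ψ) 2 μ :=
    (hψ.continuous_fderiv one_ne_zero).memLp_of_hasCompactSupport (hψc.fderiv (𝕜 := ℝ))
  have hHolder : eLpNorm (w • ψ) 2 μ ≤ eLpNorm w d μ * eLpNorm ψ p' μ :=
    eLpNorm_smul_le_mul_eLpNorm hψq.1 hw.1
  have hwψ : MemLp (w • ψ) 2 μ := hψq.smul hw
  calc ∫ x, ‖v x‖ ^ 2 * ‖ψ x‖ ^ 2 ∂μ ≤ ∫ x, ‖(w • ψ) x‖ ^ 2 ∂μ := by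
        refine integral_mono_of_nonneg (Eventually.of_forall fun x => by positivity)
          (by simpa using hwψ.integrable_norm_pow (p := 2) two_ne_zero)
          (Eventually.of_forall fun x => ?_)
        simp only [Pi.smul_apply', norm_smul, Real.norm_eq_abs, mul_pow, sq_abs]
        gcongr
        exact hvw x
    _ = (eLpNorm (w • ψ) 2 μ).toReal ^ 2 := hwψ.integral_norm_sq_eq
    _ ≤ ((eLpNorm w d μ).toReal * SNormLESNormFDerivOfEqConst F μ 2 *
          (eLpNorm (fderiv ℝ ψ) 2 μ).toReal) ^ 2 := by
      gcongr
      calc (eLpNorm (w • ψ) 2 μ).toReal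
          ≤ (eLpNorm w d μ *
              (SNormLESNormFDerivOfEqConst F μ 2 * eLpNorm (fderiv ℝ ψ) 2 μ)).toReal :=
            ENNReal.toReal_mono (ENNReal.mul_ne_top hw.2.ne
              (ENNReal.mul_ne_top ENNReal.coe_ne_top hdψ.2.ne))
              (hHolder.trans (mul_le_mul_right hSobolev _))
        _ = _ := by simp [ENNReal.toReal_mul, mul_assoc]
    _ = _ := by rw [hdψ.integral_norm_sq_eq]; ring

theorem integral_indicator_Icc_inv_pow_finrank_norm [Nontrivial E] {a a' : ℝ} (ha : 0 < a)
    (haa' : a ≤ a') :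
    ∫ x, (Icc a a').indicator (fun r => (r ^ finrank ℝ E)⁻¹) ‖x‖ ∂μ =
      finrank ℝ E * μ.real (ball 0 1) * log (a' / a) := by
  have hradial : ∫ r in Ioi (0 : ℝ), r ^ (finrank ℝ E - 1) •
      (Icc a a').indicator (fun r => (r ^ finrank ℝ E)⁻¹) r = ∫ r in a..a', r⁻¹ := by
    rw [intervalIntegral.integral_of_le haa', ← integral_Icc_eq_integral_Ioc,
      ← integral_indicator measurableSet_Icc]
    rw [setIntegral_eq_integral_of_forall_compl_eq_zero fun r hr => ?_]
    · refine integral_congr_ae (Eventually.of_forall fun r => ?_)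
      by_cases hr : r ∈ Icc a a'
      · have hr0 : r ≠ 0 := (ha.trans_le hr.1).ne'
        simp only [indicator_of_mem hr, smul_eq_mul]
        rw [pow_sub₀ r hr0 finrank_pos, pow_one]
        field_simp
      · simp [indicator_of_notMem hr]
    · have : r ∉ Icc a a' := fun h => hr (ha.trans_le h.1)
      simp [indicator_of_notMem this]
  rw [integral_fun_norm_addHaar μ, hradial, integral_inv_of_pos ha (ha.trans_le haa')]
  simp [mul_assoc]

theorem lintegral_enorm_annulusWeight_rpow [Nontrivial E] {a a' : ℝ} (ha : 0 < a) (haa' : a < a') :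
    ∫⁻ x, ‖annulusWeight a a' x‖ₑ ^ (finrank ℝ E : ℝ) ∂μ =
      ENNReal.ofReal (finrank ℝ E * μ.real (ball 0 1) * log (a' / a)) := by
  have hpt : ∀ x : E, ‖annulusWeight a a' x‖ₑ ^ (finrank ℝ E : ℝ) =
      ENNReal.ofReal ((Icc a a').indicator (fun r => (r ^ finrank ℝ E)⁻¹) ‖x‖) := by
    intro x
    by_cases hx : ‖x‖ ∈ Icc a a'
    · have hx0 : 0 ≤ ‖x‖⁻¹ := inv_nonneg.2 (norm_nonneg x)
      rw [annulusWeight, indicator_of_mem hx, indicator_of_mem hx, Real.enorm_eq_ofReal hx0,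
        ENNReal.ofReal_rpow_of_nonneg hx0 (Nat.cast_nonneg _), rpow_natCast, inv_pow]
    · simp [annulusWeight, indicator_of_notMem hx, finrank_pos.ne']
  have hintegral := integral_indicator_Icc_inv_pow_finrank_norm μ ha haa'.le
  have hpos : 0 < finrank ℝ E * μ.real (ball (0 : E) 1) * log (a' / a) := by
    have : 0 < μ.real (ball (0 : E) 1) :=
      ENNReal.toReal_pos (measure_ball_pos μ 0 one_pos).ne' measure_ball_lt_top.ne
    have : 0 < log (a' / a) := log_pos ((one_lt_div ha).2 haa')
    have : (0 : ℝ) < finrank ℝ E := Nat.cast_pos.2 finrank_pos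
    positivity
  rw [lintegral_congr hpt, ← ofReal_integral_eq_lintegral_ofReal, hintegral]
  -- integrable because its Bochner integral is nonzero (non-integrable functions integrate to `0`)
  · exact Integrable.of_integral_ne_zero (hintegral ▸ hpos.ne')
  · exact Eventually.of_forall fun x => indicator_nonneg (fun r hr => by
      have := ha.trans_le hr.1
      positivity) _

theorem eLpNorm_annulusWeight [Nontrivial E] {a a' : ℝ} (ha : 0 < a) (haa' : a < a') :
    eLpNorm (annulusWeight a a') (finrank ℝ E) μ =
      ENNReal.ofReal ((finrank ℝ E * μ.real (ball 0 1) * log (a' / a)) ^ (finrank ℝ E : ℝ)⁻¹) := by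
  rw [eLpNorm_eq_lintegral_rpow_enorm_toReal (by simp [finrank_pos.ne']) (by simp),
    ENNReal.toReal_natCast, lintegral_enorm_annulusWeight_rpow μ ha haa', one_div,
    ENNReal.ofReal_rpow_of_nonneg _ (by positivity)]
  have := log_pos ((one_lt_div ha).2 haa')
  positivity

theorem memLp_annulusWeight [Nontrivial E] {a a' : ℝ} (ha : 0 < a) (haa' : a < a') :
    MemLp (annulusWeight a a' : E → ℝ) (finrank ℝ E) μ :=
  ⟨((measurable_inv.indicator measurableSet_Icc).comp measurable_norm).aestronglyMeasurable,
    by rw [eLpNorm_annulusWeight μ ha haa']; exact ENNReal.ofReal_lt_top⟩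

theorem integral_norm_fderiv_sq_mul_norm_sq_le_of_le_annulusWeight {G : Type*}
    [NormedAddCommGroup G] [NormedSpace ℝ G] (hE : 2 < finrank ℝ E) {a a' c : ℝ} (ha : 0 < a)
    (haa' : a < a') (hc : 0 ≤ c) {χ : E → G} (hχ : ∀ x, ‖fderiv ℝ χ x‖ ≤ c * annulusWeight a a' x)
    {ψ : E → F} (hψ : ContDiff ℝ 1 ψ) (hψc : HasCompactSupport ψ) :
    ∫ x, ‖fderiv ℝ χ x‖ ^ 2 * ‖ψ x‖ ^ 2 ∂μ ≤
      (c * (finrank ℝ E * μ.real (ball 0 1) * log (a' / a)) ^ (finrank ℝ E : ℝ)⁻¹ *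
        SNormLESNormFDerivOfEqConst F μ 2) ^ 2 * ∫ x, ‖fderiv ℝ ψ x‖ ^ 2 ∂μ := by
  have := Module.nontrivial_of_finrank_pos (R := ℝ) (M := E) (by omega)
  have hw := (memLp_annulusWeight μ ha haa').const_smul c
  convert integral_norm_sq_mul_norm_sq_le_of_memLp μ hE (w := c • annulusWeight a a') hχ hw hψ
    hψc using 4
  rw [eLpNorm_const_smul, eLpNorm_annulusWeight μ ha haa', ENNReal.toReal_mul,
    ENNReal.toReal_ofReal, toReal_enorm, Real.norm_of_nonneg hc]
  have := log_pos ((one_lt_div ha).2 haa')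
  positivity

end Sobolev

noncomputable def annulusAngle {E : Type*} [Norm E] (b L : ℝ) (x : E) : ℝ :=
  π / 2 * smoothTransition (log (‖x‖ / b) / L)

section annulusAngle

variable {E : Type*} [NormedAddCommGroup E] {b L : ℝ} {x : E}

theorem annulusAngle_of_norm_le (hb : 0 < b) (hL : 0 ≤ L) (hx : ‖x‖ ≤ b) :
    annulusAngle b L x = 0 := by
  have : log (‖x‖ / b) ≤ 0 := log_nonpos (by positivity) ((div_le_one hb).2 hx)
  simp [annulusAngle, smoothTransition.zero_of_nonpos (div_nonpos_of_nonpos_of_nonneg this hL)]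

theorem annulusAngle_of_le_norm (hb : 0 < b) (hL : 0 < L) (hx : b * exp L ≤ ‖x‖) :
    annulusAngle b L x = π / 2 := by
  have : L ≤ log (‖x‖ / b) := by
    rw [le_log_iff_exp_le (div_pos ((by positivity : 0 < b * exp L).trans_le hx) hb),
      le_div_iff₀ hb, mul_comm]
    exact hx
  simp [annulusAngle, smoothTransition.one_of_one_le ((one_le_div hL).2 this)]

theorem annulusAngle_eventuallyEq_of_norm_lt (hb : 0 < b) (hL : 0 ≤ L) (hx : ‖x‖ < b) :
    annulusAngle b L =ᶠ[𝓝 x] fun _ => 0 := by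
  filter_upwards [isOpen_lt continuous_norm continuous_const |>.mem_nhds hx] with y hy
  exact annulusAngle_of_norm_le hb hL (le_of_lt hy)

theorem annulusAngle_eventuallyEq_of_lt_norm (hb : 0 < b) (hL : 0 < L) (hx : b * exp L < ‖x‖) :
    annulusAngle b L =ᶠ[𝓝 x] fun _ => π / 2 := by
  filter_upwards [isOpen_lt continuous_const continuous_norm |>.mem_nhds hx] with y hy
  exact annulusAngle_of_le_norm hb hL (le_of_lt hy)

variable [InnerProductSpace ℝ E]

theorem contDiff_annulusAngle {n : ℕ∞} (hb : 0 < b) (hL : 0 ≤ L) :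
    ContDiff ℝ n (annulusAngle (E := E) b L) := by
  refine contDiff_iff_contDiffAt.2 fun x => ?_
  rcases lt_or_ge ‖x‖ b with hx | hx
  · exact contDiffAt_const.congr_of_eventuallyEq (annulusAngle_eventuallyEq_of_norm_lt hb hL hx)
  · have hx0 : x ≠ 0 := norm_pos_iff.1 (hb.trans_le hx)
    have hlog : ContDiffAt ℝ n (fun y : E => log (‖y‖ / b)) x :=
      ((contDiffAt_norm ℝ hx0).div_const b).log (by positivity)
    exact contDiffAt_const.mul (smoothTransition.contDiff.contDiffAt.comp x (hlog.div_const L))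

theorem hasDerivAt_annulusAngle_radial {r : ℝ} (hb : 0 < b) (hr : 0 < r) :
    HasDerivAt (fun s => π / 2 * smoothTransition (log (s / b) / L))
      (π / 2 * (deriv smoothTransition (log (r / b) / L) * (1 / (L * r)))) r := by
  have hlog : HasDerivAt (fun s => log (s / b) / L) (1 / (L * r)) r := by
    have h := (((hasDerivAt_id' r).div_const b).log (by positivity)).div_const L
    rwa [show 1 / b / (r / b) / L = 1 / (L * r) by field_simp] at h
  exact ((smoothTransition.contDiff (n := 1)).differentiable one_ne_zero _).hasDerivAt.comp r hlog
    |>.const_mul _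

theorem norm_fderiv_annulusAngle_le {K : ℝ≥0} (hK : LipschitzWith K smoothTransition)
    (hb : 0 < b) (hL : 0 < L) (x : E) :
    ‖fderiv ℝ (annulusAngle b L) x‖ ≤ π / 2 * K / L * annulusWeight b (b * exp L) x := by
  by_cases hx : ‖x‖ ∈ Icc b (b * exp L)
  · have hr : 0 < ‖x‖ := hb.trans_le hx.1
    have hderiv : HasFDerivAt (annulusAngle b L)
        ((π / 2 * (deriv smoothTransition (log (‖x‖ / b) / L) * (1 / (L * ‖x‖)))) •
          fderiv ℝ (fun y : E => ‖y‖) x) x :=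
      (hasDerivAt_annulusAngle_radial hb hr).comp_hasFDerivAt x
      ((contDiffAt_norm ℝ (norm_pos_iff.1 hr)).differentiableAt one_ne_zero).hasFDerivAt
    have hnorm : ‖fderiv ℝ (fun y : E => ‖y‖) x‖ ≤ 1 := by
      simpa using norm_fderiv_le_of_lipschitz ℝ (lipschitzWith_one_norm (E := E)) (x₀ := x)
    have hst : |deriv smoothTransition (log (‖x‖ / b) / L)| ≤ K := by
      simpa using norm_deriv_le_of_lipschitz hK
    rw [annulusWeight, indicator_of_mem hx, hderiv.fderiv, norm_smul]
    calc _ ≤ ‖π / 2 * (deriv smoothTransition (log (‖x‖ / b) / L) * (1 / (L * ‖x‖)))‖ * 1 := by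
          gcongr
      _ ≤ π / 2 * (K * (1 / (L * ‖x‖))) := by
          rw [mul_one, norm_mul, norm_mul, Real.norm_of_nonneg (by positivity),
            Real.norm_of_nonneg (by positivity : 0 ≤ 1 / (L * ‖x‖))]
          gcongr
          simpa using hst
      _ = _ := by field_simp
  · have hzero : fderiv ℝ (annulusAngle b L) x = 0 := by
      rw [mem_Icc, not_and_or, not_le, not_le] at hx
      rcases hx with h | h
      · exact (annulusAngle_eventuallyEq_of_norm_lt hb hL.le h).fderiv_eq.trans
          (fderiv_const_apply _)
      · exact (annulusAngle_eventuallyEq_of_lt_norm hb hL h).fderiv_eq.trans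
          (fderiv_const_apply _)
    simp [annulusWeight, indicator_of_notMem hx, hzero]

theorem exists_lipschitzWith_annulusAngle (hb : 0 < b) (hL : 0 < L) :
    ∃ K, LipschitzWith K (annulusAngle (E := E) b L) := by
  obtain ⟨K, hK⟩ := exists_lipschitzWith_smoothTransition
  refine ⟨(π / 2 * K / L * b⁻¹).toNNReal, lipschitzWith_of_nnnorm_fderiv_le
    ((contDiff_annulusAngle (n := 1) hb hL.le).differentiable one_ne_zero) fun x => ?_⟩
  rw [← NNReal.coe_le_coe, coe_nnnorm, coe_toNNReal _ (by positivity)]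
  exact (norm_fderiv_annulusAngle_le hK hb hL x).trans
    (mul_le_mul_of_nonneg_left (annulusWeight_le_inv hb x) (by positivity))

end annulusAngle

section Cutoff

variable {E F : Type*} [NormedAddCommGroup E] [InnerProductSpace ℝ E] [FiniteDimensional ℝ E]
  [MeasurableSpace E] [BorelSpace E] (μ : Measure E) [μ.IsAddHaarMeasure]
  [NormedAddCommGroup F] [NormedSpace ℝ F] [FiniteDimensional ℝ F]

theorem integral_norm_fderiv_comp_annulusAngle_sq_mul_norm_sq_le (hE : 2 < finrank ℝ E)
    {K : ℝ≥0} (hK : LipschitzWith K smoothTransition) {b L : ℝ} (hb : 0 < b) (hL : 0 < L)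
    {f : ℝ → ℝ} (hf : LipschitzWith 1 f) (hfd : Differentiable ℝ f) {ψ : E → F}
    (hψ : ContDiff ℝ 1 ψ) (hψc : HasCompactSupport ψ) :
    ∫ x, ‖fderiv ℝ (f ∘ annulusAngle b L) x‖ ^ 2 * ‖ψ x‖ ^ 2 ∂μ ≤
      (π / 2 * K * SNormLESNormFDerivOfEqConst F μ 2 *
        (finrank ℝ E * μ.real (ball 0 1) * L) ^ (finrank ℝ E : ℝ)⁻¹ / L) ^ 2 *
        ∫ x, ‖fderiv ℝ ψ x‖ ^ 2 ∂μ := by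
  have hgrad (x : E) :
      ‖fderiv ℝ (f ∘ annulusAngle b L) x‖ ≤ π / 2 * K / L * annulusWeight b (b * exp L) x := by
    refine le_trans ?_ (norm_fderiv_annulusAngle_le hK hb hL x)
    simpa using norm_fderiv_comp_le_of_lipschitzWith hf (hfd _)
      ((contDiff_annulusAngle (n := 1) hb hL.le).differentiable one_ne_zero x)
  have := integral_norm_fderiv_sq_mul_norm_sq_le_of_le_annulusWeight μ hE hb
    (lt_mul_of_one_lt_right hb (one_lt_exp_iff.2 hL)) (by positivity) hgrad hψ hψc
  rw [mul_div_cancel_left₀ _ hb.ne', log_exp] at this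
  exact this.trans_eq (by ring)

end Cutoff

theorem integral_norm_fderiv_sq_le_integral_gradSqC1 {d : ℕ} {ψ : EuclideanSpace ℝ (Fin d) → ℂ}
    (hψ : ContDiff ℝ 1 ψ) (hψc : HasCompactSupport ψ) :
    ∫ x, ‖fderiv ℝ ψ x‖ ^ 2 ≤ ∫ x, gradSqC1 d ψ x := by
  have hcont : Continuous (gradSqC1 d ψ) := by
    have := hψ.continuous_fderiv one_ne_zero
    unfold gradSqC1
    fun_prop
  have hsupp : HasCompactSupport (gradSqC1 d ψ) := by
    have : gradSqC1 d ψ = (fun T : EuclideanSpace ℝ (Fin d) →L[ℝ] ℂ =>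
        ∑ i, ‖T (EuclideanSpace.single i 1)‖ ^ 2) ∘ fderiv ℝ ψ := rfl
    rw [this]
    exact (hψc.fderiv (𝕜 := ℝ)).comp_left (by simp)
  refine integral_mono_of_nonneg (Eventually.of_forall fun x => by positivity)
    (hcont.integrable_of_hasCompactSupport hsupp) (Eventually.of_forall fun x => ?_)
  simpa [gradSqC1] using
    (fderiv ℝ ψ x).norm_sq_le_sum_norm_apply_sq (EuclideanSpace.basisFun (Fin d) ℝ)

theorem stmt_1 (d : ℕ) (hd : 3 ≤ d) (ε b : ℝ) (hε : 0 < ε) (hb : 0 < b) :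
    ∃ (btil : ℝ) (χ₁ χ₂ : EuclideanSpace ℝ (Fin d) → ℝ)
      (S : Set (EuclideanSpace ℝ (Fin d))),
      b < btil ∧
      (∃ K : NNReal, LipschitzWith K χ₁) ∧
      (∃ K : NNReal, LipschitzWith K χ₂) ∧
      IsClosed S ∧ volume S = 0 ∧
      ContDiffOn ℝ 1 χ₁ Sᶜ ∧ ContDiffOn ℝ 1 χ₂ Sᶜ ∧
      (∀ x, χ₁ x ^ 2 + χ₂ x ^ 2 = 1) ∧
      (∀ x, ‖x‖ ≤ b → χ₁ x = 1) ∧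
      (∀ x, btil < ‖x‖ → χ₁ x = 0) ∧
      (∀ χ ∈ ({χ₁, χ₂} : Set (EuclideanSpace ℝ (Fin d) → ℝ)),
        ∀ ψ : EuclideanSpace ℝ (Fin d) → ℂ,
          ContDiff ℝ (⊤ : ℕ∞) ψ → HasCompactSupport ψ →
          (∫ x, ‖fderiv ℝ χ x‖ ^ 2 * ‖ψ x‖ ^ 2) ≤ 4 * ε * ∫ x, gradSqC1 d ψ x) := by
  obtain ⟨K, hK⟩ := exists_lipschitzWith_smoothTransition
  set E := EuclideanSpace ℝ (Fin d)
  have hE : 2 < finrank ℝ E := by rw [finrank_euclideanSpace_fin]; omega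
  obtain ⟨L, hL, hLε⟩ := exists_pos_sq_mul_rpow_div_lt
    (π / 2 * K * SNormLESNormFDerivOfEqConst ℂ (volume : Measure E) 2)
    (D := finrank ℝ E * (volume : Measure E).real (ball 0 1)) (p := (finrank ℝ E : ℝ)⁻¹)
    (by positivity) (inv_lt_one_of_one_lt₀ (by exact_mod_cast one_lt_two.trans hE))
    (by positivity : 0 < 4 * ε)
  set θ := annulusAngle (E := E) b L
  have hθ : ContDiff ℝ 1 θ := contDiff_annulusAngle hb hL.le
  obtain ⟨Kθ, hKθ⟩ := exists_lipschitzWith_annulusAngle (E := E) hb hL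
  refine ⟨b * exp L, cos ∘ θ, sin ∘ θ, ∅, lt_mul_of_one_lt_right hb (one_lt_exp_iff.2 hL),
    ⟨_, lipschitzWith_cos.comp hKθ⟩, ⟨_, lipschitzWith_sin.comp hKθ⟩, isClosed_empty,
    measure_empty, (contDiff_cos.comp hθ).contDiffOn, (contDiff_sin.comp hθ).contDiffOn,
    fun x => cos_sq_add_sin_sq _, fun x hx => ?_, fun x hx => ?_, ?_⟩
  · simp [θ, annulusAngle_of_norm_le hb hL.le hx]
  · simp [θ, annulusAngle_of_le_norm hb hL hx.le]
  rintro χ hχ ψ hψ hψc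
  have hψ1 : ContDiff ℝ 1 ψ := hψ.of_le (by exact_mod_cast le_top)
  have hestimate {f : ℝ → ℝ} (hf : LipschitzWith 1 f) (hfd : Differentiable ℝ f) :
      ∫ x, ‖fderiv ℝ (f ∘ θ) x‖ ^ 2 * ‖ψ x‖ ^ 2 ≤ 4 * ε * ∫ x, gradSqC1 d ψ x :=
    (integral_norm_fderiv_comp_annulusAngle_sq_mul_norm_sq_le volume hE hK hb hL hf hfd
      hψ1 hψc).trans (mul_le_mul hLε.le (integral_norm_fderiv_sq_le_integral_gradSqC1 hψ1 hψc)
        (integral_nonneg fun x => by positivity) (by positivity))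
  rcases hχ with rfl | rfl
  · exact hestimate lipschitzWith_cos differentiable_cos
  · exact hestimate lipschitzWith_sin differentiable_sin
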